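/- Let X and H2 hold, let the process be Markov with respect to its natural filtration, let p ≥ 1 and assume ∫_{ℝ^d} |y|^{γp} Q(y) dy < ∞. Then for all 0 ≤ r < s ≤ T and every x ∈ ℝ^d, E_x |h(X_s) − h(X_r)|^p ≤ ‖h‖_γ^p C_T (s − r)^{γp/α} ∫_{ℝ^d} Q(y) |y|^{γp} dy. -/

import Mathlib

open MeasureTheory

def natFiltration {Ω : Type} [MeasurableSpace Ω] {d : ℕ}
    (X : ℝ → Ω → EuclideanSpace ℝ (Fin d)) (u : ℝ) : MeasurableSpace Ω :=
  ⨆ s ∈ Set.Iic u, MeasurableSpace.comap (X s) inferInstance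

open Module ProbabilityTheory
open scoped ENNReal

/-!
Hölder continuity reduces the claim to the moment bound
`E_x ‖X_s - X_r‖^{γp} ≤ C (s-r)^{γp/α} ∫ Q(y) |y|^{γp} dy`.
The Markov property identifies the joint law of `(X_r, X_s)` as the law of `X_r` composed with the
kernel `z ↦ p_{s-r}(z, y) dy`, and for every `z` the substitution `w = (s-r)^{-1/α} (z - y)` turns
the density bound into `∫ p_{s-r}(z, y) |y - z|^{γp} dy ≤ C (s-r)^{γp/α} ∫ Q(w) |w|^{γp} dw`.
-/

theorem rpow_abs_sub_le_of_holder {E : Type*} [SeminormedAddCommGroup E] {h : E → ℝ}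
    {H γ p : ℝ} (hH : 0 ≤ H) (hp : 0 ≤ p) (hh : ∀ a b, |h a - h b| ≤ H * ‖a - b‖ ^ γ) (a b : E) :
    |h a - h b| ^ p ≤ H ^ p * ‖a - b‖ ^ (γ * p) := by
  rw [Real.rpow_mul (norm_nonneg _), ← Real.mul_rpow hH (by positivity)]
  exact Real.rpow_le_rpow (abs_nonneg _) (hh a b) hp

theorem integrable_of_map_eq_withDensity_ofReal {Ω α : Type*} [MeasurableSpace Ω]
    [MeasurableSpace α] {μ : Measure Ω} [IsFiniteMeasure μ] {ν : Measure α} {f : Ω → α}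
    {q : α → ℝ} (hq : Measurable q) (hq0 : ∀ y, 0 ≤ q y)
    (h : μ.map f = ν.withDensity fun y => ENNReal.ofReal (q y)) : Integrable q ν := by
  refine ⟨hq.aestronglyMeasurable, ?_⟩
  rw [hasFiniteIntegral_iff_ofReal (Filter.Eventually.of_forall hq0), ← setLIntegral_univ,
    ← withDensity_apply _ MeasurableSet.univ, ← h]
  exact measure_lt_top _ _

section Scaling
variable {E : Type*} [NormedAddCommGroup E] [NormedSpace ℝ E]

theorem rpow_norm_sub_eq_mul_rpow_norm_smul {u : ℝ} (hu : 0 < u) (α β : ℝ) (y z : E) :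
    ‖y - z‖ ^ β = u ^ (β / α) * ‖u ^ (-1 / α) • (z - y)‖ ^ β := by
  rw [norm_smul, Real.norm_of_nonneg (Real.rpow_nonneg hu.le _), norm_sub_rev,
    Real.mul_rpow (Real.rpow_nonneg hu.le _) (norm_nonneg _), ← Real.rpow_mul hu.le, ← mul_assoc,
    ← Real.rpow_add hu]
  ring_nf
  simp

variable [MeasurableSpace E] [BorelSpace E] [FiniteDimensional ℝ E] (μ : Measure E)
  [μ.IsAddHaarMeasure]

theorem lintegral_comp_smul_sub (f : E → ℝ≥0∞) (z : E) {c : ℝ} (hc : c ≠ 0) :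
    ∫⁻ y, f (c • (z - y)) ∂μ = ENNReal.ofReal |(c ^ finrank ℝ E)⁻¹| * ∫⁻ w, f w ∂μ := by
  rw [lintegral_sub_left_eq_self (fun w => f (c • w)) z, ← smul_eq_mul, ← lintegral_smul_measure,
    ← Measure.map_addHaar_smul μ hc]
  exact (lintegral_map_equiv f (MeasurableEquiv.smul₀ c hc)).symm

theorem lintegral_mul_rpow_norm_sub_le {q Q : E → ℝ} {C u α β : ℝ} (hC : 0 ≤ C) (hu : 0 < u)
    (z : E) (hq : ∀ y, q y ≤ C * u ^ (-(finrank ℝ E : ℝ) / α) * Q (u ^ (-1 / α) • (z - y))) :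
    ∫⁻ y, ENNReal.ofReal (q y) * ENNReal.ofReal (‖y - z‖ ^ β) ∂μ
      ≤ ENNReal.ofReal (C * u ^ (β / α)) * ∫⁻ w, ENNReal.ofReal (Q w * ‖w‖ ^ β) ∂μ := by
  set c := u ^ (-1 / α)
  set n : ℝ := (finrank ℝ E : ℝ)
  have hK : 0 ≤ C * u ^ (-n / α) * u ^ (β / α) := by positivity
  have hpoint : ∀ y, ENNReal.ofReal (q y) * ENNReal.ofReal (‖y - z‖ ^ β)
      ≤ ENNReal.ofReal (C * u ^ (-n / α) * u ^ (β / α)) *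
        ENNReal.ofReal (Q (c • (z - y)) * ‖c • (z - y)‖ ^ β) := fun y => by
    rw [← ENNReal.ofReal_mul hK, ← ENNReal.ofReal_mul' (by positivity)]
    refine ENNReal.ofReal_le_ofReal ?_
    rw [rpow_norm_sub_eq_mul_rpow_norm_smul hu α β y z]
    have := mul_le_mul_of_nonneg_right (hq y)
      (mul_nonneg (Real.rpow_nonneg hu.le (β / α)) (Real.rpow_nonneg (norm_nonneg (c • (z - y))) β))
    linarith
  have hc : |(c ^ finrank ℝ E)⁻¹| = u ^ (n / α) := by
    rw [← Real.rpow_natCast, ← Real.rpow_mul hu.le, ← Real.rpow_neg hu.le,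
      abs_of_nonneg (by positivity)]
    congr 1
    simp only [n]
    ring
  calc ∫⁻ y, ENNReal.ofReal (q y) * ENNReal.ofReal (‖y - z‖ ^ β) ∂μ
      ≤ ∫⁻ y, ENNReal.ofReal (C * u ^ (-n / α) * u ^ (β / α)) *
          ENNReal.ofReal (Q (c • (z - y)) * ‖c • (z - y)‖ ^ β) ∂μ := lintegral_mono hpoint
    _ = ENNReal.ofReal (C * u ^ (-n / α) * u ^ (β / α)) * ENNReal.ofReal (u ^ (n / α)) *
          ∫⁻ w, ENNReal.ofReal (Q w * ‖w‖ ^ β) ∂μ := by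
      rw [lintegral_const_mul' _ _ ENNReal.ofReal_ne_top,
        lintegral_comp_smul_sub μ (fun w => ENNReal.ofReal (Q w * ‖w‖ ^ β)) z
          (Real.rpow_pos_of_pos hu _).ne', hc]
      ring
    _ = ENNReal.ofReal (C * u ^ (β / α)) * ∫⁻ w, ENNReal.ofReal (Q w * ‖w‖ ^ β) ∂μ := by
      rw [← ENNReal.ofReal_mul hK]
      congr 2
      have : u ^ (-n / α) * u ^ (n / α) = 1 := by
        rw [← Real.rpow_add hu]; ring_nf; simp
      linear_combination C * u ^ (β / α) * this

end Scaling

section DensityKernel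
variable {α : Type*} [MeasurableSpace α]

/-- As with `Kernel.withDensity`, this is the zero kernel unless `Function.uncurry p` is
measurable. -/
noncomputable def densityKernel (ν : Measure α) [SFinite ν] (p : α → α → ℝ) : Kernel α α :=
  (Kernel.const α ν).withDensity fun z y => ENNReal.ofReal (p z y)

variable (ν : Measure α) [SFinite ν] {p : α → α → ℝ}

instance (p : α → α → ℝ) : IsSFiniteKernel (densityKernel ν p) :=
  Kernel.IsSFiniteKernel.withDensity _ fun _ _ => ENNReal.ofReal_ne_top

theorem densityKernel_apply (hp : Measurable (Function.uncurry p)) (z : α) :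
    densityKernel ν p z = ν.withDensity fun y => ENNReal.ofReal (p z y) := by
  rw [densityKernel, Kernel.withDensity_apply _ (by exact hp.ennreal_ofReal),
    Kernel.const_apply]

theorem lintegral_densityKernel (hp : Measurable (Function.uncurry p)) (z : α) {f : α → ℝ≥0∞}
    (hf : Measurable f) :
    ∫⁻ y, f y ∂densityKernel ν p z = ∫⁻ y, ENNReal.ofReal (p z y) * f y ∂ν := by
  rw [densityKernel_apply ν hp, lintegral_withDensity_eq_lintegral_mul _
    (by exact (hp.comp measurable_prodMk_left).ennreal_ofReal) hf]
  rfl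

theorem densityKernel_apply_eq_ofReal_integral (hp : Measurable (Function.uncurry p))
    (hp0 : ∀ z y, 0 ≤ p z y) (hpint : ∀ z, Integrable (p z) ν) (z : α) {B : Set α}
    (hB : MeasurableSet B) :
    densityKernel ν p z B = ENNReal.ofReal (∫ y, p z y * B.indicator (fun _ => 1) y ∂ν) := by
  have : (fun y => p z y * B.indicator (fun _ => (1 : ℝ)) y) = B.indicator (p z) := by
    ext y; by_cases hy : y ∈ B <;> simp [hy]
  rw [densityKernel_apply ν hp, withDensity_apply _ hB, this, integral_indicator hB,
    ofReal_integral_eq_lintegral_ofReal (hpint z).restrict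
      (Filter.Eventually.of_forall (hp0 z))]

end DensityKernel

section ConditionalLaw
variable {Ω α : Type*} {m mΩ : MeasurableSpace Ω} [MeasurableSpace α] {μ : Measure Ω}
  [IsFiniteMeasure μ] {ν : Measure α} [SFinite ν] {Y Z : Ω → α} {p : α → α → ℝ}

theorem map_prod_eq_compProd_of_condExp (hm : m ≤ mΩ) (hY : Measurable[m] Y) (hZ : Measurable Z)
    (hp : Measurable (Function.uncurry p)) (hp0 : ∀ z y, 0 ≤ p z y)
    (hpint : ∀ z, Integrable (p z) ν)
    (hcond : ∀ B, MeasurableSet B → μ[fun ω => B.indicator (fun _ => 1) (Z ω) | m]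
      =ᵐ[μ] fun ω => ∫ y, p (Y ω) y * B.indicator (fun _ => 1) y ∂ν) :
    μ.map (fun ω => (Y ω, Z ω)) = μ.map Y ⊗ₘ densityKernel ν p := by
  have hY' : Measurable Y := hY.mono hm le_rfl
  refine Measure.ext_prod fun {A B} hA hB => ?_
  set g : α → ℝ := fun z => ∫ y, p z y * B.indicator (fun _ => 1) y ∂ν
  have hgY : Integrable (fun ω => g (Y ω)) μ := integrable_condExp.congr (hcond B hB)
  have hS : MeasurableSet[m] (Y ⁻¹' A) := hY hA
  have hindZ : (fun ω => B.indicator (fun _ => (1 : ℝ)) (Z ω)) = (Z ⁻¹' B).indicator 1 := by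
    ext ω; by_cases hω : Z ω ∈ B <;> simp [hω]
  have hintZ : Integrable (fun ω => B.indicator (fun _ => (1 : ℝ)) (Z ω)) μ := by
    rw [hindZ]; exact (integrable_const 1).indicator (hZ hB)
  rw [Measure.map_apply (hY'.prodMk hZ) (hA.prod hB), Set.mk_preimage_prod,
    Measure.compProd_apply_prod hA hB,
    setLIntegral_map hA (Kernel.measurable_coe _ hB) hY']
  calc μ (Y ⁻¹' A ∩ Z ⁻¹' B)
      = ENNReal.ofReal (∫ ω in Y ⁻¹' A, B.indicator (fun _ => 1) (Z ω) ∂μ) := by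
        rw [hindZ, integral_indicator_one (hZ hB), measureReal_restrict_apply (hZ hB),
          ofReal_measureReal, Set.inter_comm]
    _ = ENNReal.ofReal (∫ ω in Y ⁻¹' A, g (Y ω) ∂μ) := by
        rw [← setIntegral_condExp hm hintZ hS]
        exact congrArg _ (integral_congr_ae (ae_restrict_of_ae (hcond B hB)))
    _ = ∫⁻ ω in Y ⁻¹' A, densityKernel ν p (Y ω) B ∂μ := by
        rw [ofReal_integral_eq_lintegral_ofReal hgY.restrict
          (Filter.Eventually.of_forall fun ω => integral_nonneg fun y => ?_)]
        · simp_rw [densityKernel_apply_eq_ofReal_integral ν hp hp0 hpint _ hB, g]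
        · exact mul_nonneg (hp0 _ _) (Set.indicator_nonneg (fun _ _ => zero_le_one) _)

end ConditionalLaw

section Moments
variable {Ω : Type*} [MeasurableSpace Ω] {μ : Measure Ω}

theorem lintegral_comp_le_of_map_eq_compProd {α β : Type*} [MeasurableSpace α]
    [MeasurableSpace β] [IsProbabilityMeasure μ] {Y : Ω → α} {Z : Ω → β} (hY : Measurable Y)
    (hZ : Measurable Z) {κ : Kernel α β} [IsSFiniteKernel κ]
    (h : μ.map (fun ω => (Y ω, Z ω)) = μ.map Y ⊗ₘ κ) {F : α × β → ℝ≥0∞} (hF : Measurable F)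
    {K : ℝ≥0∞} (hK : ∀ a, ∫⁻ b, F (a, b) ∂κ a ≤ K) :
    ∫⁻ ω, F (Y ω, Z ω) ∂μ ≤ K := by
  calc ∫⁻ ω, F (Y ω, Z ω) ∂μ = ∫⁻ q, F q ∂μ.map (fun ω => (Y ω, Z ω)) :=
        (lintegral_map hF (hY.prodMk hZ)).symm
    _ = ∫⁻ a, ∫⁻ b, F (a, b) ∂κ a ∂μ.map Y := by rw [h, Measure.lintegral_compProd hF]
    _ ≤ ∫⁻ _, K ∂μ.map Y := lintegral_mono hK
    _ = K := by
        rw [lintegral_const, Measure.map_apply hY MeasurableSet.univ, Set.preimage_univ,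
          measure_univ, mul_one]

theorem integral_rpow_abs_sub_le_of_holder {E : Type*} [NormedAddCommGroup E] [MeasurableSpace E]
    [OpensMeasurableSpace E] [SecondCountableTopology E] {Y Z : Ω → E} (hY : Measurable Y)
    (hZ : Measurable Z) {h : E → ℝ} (hh : Measurable h) {H γ p B : ℝ} (hH : 0 ≤ H)
    (hp : 0 ≤ p) (hB : 0 ≤ B) (hhol : ∀ a b, |h a - h b| ≤ H * ‖a - b‖ ^ γ)
    (hmom : ∫⁻ ω, ENNReal.ofReal (‖Z ω - Y ω‖ ^ (γ * p)) ∂μ ≤ ENNReal.ofReal B) :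
    ∫ ω, |h (Z ω) - h (Y ω)| ^ p ∂μ ≤ H ^ p * B := by
  rw [integral_eq_lintegral_of_nonneg_ae (Filter.Eventually.of_forall fun ω => by positivity)
    (by fun_prop)]
  refine ENNReal.toReal_le_of_le_ofReal (by positivity) ?_
  calc ∫⁻ ω, ENNReal.ofReal (|h (Z ω) - h (Y ω)| ^ p) ∂μ
      ≤ ∫⁻ ω, ENNReal.ofReal (H ^ p) * ENNReal.ofReal (‖Z ω - Y ω‖ ^ (γ * p)) ∂μ :=
        lintegral_mono fun ω => by
          rw [← ENNReal.ofReal_mul (by positivity)]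
          exact ENNReal.ofReal_le_ofReal (rpow_abs_sub_le_of_holder hH hp hhol _ _)
    _ = ENNReal.ofReal (H ^ p) * ∫⁻ ω, ENNReal.ofReal (‖Z ω - Y ω‖ ^ (γ * p)) ∂μ :=
        lintegral_const_mul' _ _ ENNReal.ofReal_ne_top
    _ ≤ ENNReal.ofReal (H ^ p) * ENNReal.ofReal B := by gcongr
    _ = ENNReal.ofReal (H ^ p * B) := (ENNReal.ofReal_mul (by positivity)).symm

end Moments

theorem measurable_natFiltration {Ω : Type} [MeasurableSpace Ω] {d : ℕ}
    (X : ℝ → Ω → EuclideanSpace ℝ (Fin d)) (r : ℝ) : Measurable[natFiltration X r] (X r) :=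
  Measurable.of_comap_le (le_iSup₂ (f := fun u (_ : u ∈ Set.Iic r) =>
    MeasurableSpace.comap (X u) inferInstance) r (Set.mem_Iic.mpr le_rfl))

theorem natFiltration_le {Ω : Type} [MeasurableSpace Ω] {d : ℕ}
    {X : ℝ → Ω → EuclideanSpace ℝ (Fin d)} (hX : ∀ u, Measurable (X u)) (r : ℝ) :
    natFiltration X r ≤ ‹MeasurableSpace Ω› :=
  iSup₂_le fun u _ => (hX u).comap_le

theorem statement_7_general
    {d : ℕ} {Ω : Type} [MeasurableSpace Ω]
    (X : ℝ → Ω → EuclideanSpace ℝ (Fin d))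
    (P : EuclideanSpace ℝ (Fin d) → Measure Ω)
    (hP : ∀ x, IsProbabilityMeasure (P x))
    (hXmeas : Measurable (Function.uncurry X))
    (T Cst α : ℝ) (hCst : 0 < Cst)
    (Q : EuclideanSpace ℝ (Fin d) → ℝ)
    (hQnn : ∀ y, 0 ≤ Q y)
    (pt : ℝ → EuclideanSpace ℝ (Fin d) → EuclideanSpace ℝ (Fin d) → ℝ)
    (hptmeas : Measurable (fun q : ℝ × EuclideanSpace ℝ (Fin d) × EuclideanSpace ℝ (Fin d) => pt q.1 q.2.1 q.2.2))
    (hptnn : ∀ t x y, 0 < t → 0 ≤ pt t x y)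
    (hptbound : ∀ x y t, 0 < t → t ≤ T →
      pt t x y ≤ Cst * t ^ (-(d:ℝ)/α) * Q ((t ^ (-1/α)) • (x - y)))
    (hdens : ∀ x t, 0 < t →
      Measure.map (X t) (P x)
        = (volume : Measure (EuclideanSpace ℝ (Fin d))).withDensity
            (fun y => ENNReal.ofReal (pt t x y)))
    (hMarkov : ∀ (x : EuclideanSpace ℝ (Fin d)) (u v : ℝ),
      ∀ g : EuclideanSpace ℝ (Fin d) → ℝ, Measurable g → (∃ M, ∀ y, |g y| ≤ M) →
      0 ≤ u → 0 < v →
      (P x)[(fun ω => g (X (u + v) ω)) | natFiltration X u]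
        =ᵐ[P x] (fun ω => ∫ y, pt v (X u ω) y * g y))
    (h : EuclideanSpace ℝ (Fin d) → ℝ) (hhmeas : Measurable h)
    (γ : ℝ)
    (Hγ : ℝ) (hHγ0 : 0 ≤ Hγ) (hHγ : ∀ a b, |h a - h b| ≤ Hγ * ‖a - b‖ ^ γ)
    (p : ℝ) (hp : 1 ≤ p)
    (hQγp : Integrable (fun y : EuclideanSpace ℝ (Fin d) => Q y * ‖y‖ ^ (γ * p))) :
    ∀ (x : EuclideanSpace ℝ (Fin d)) (r s : ℝ), 0 ≤ r → r < s → s ≤ T →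
      (∫ ω, |h (X s ω) - h (X r ω)| ^ p ∂ P x)
        ≤ Hγ ^ p * Cst * (s - r) ^ (γ * p / α) * ∫ y, Q y * ‖y‖ ^ (γ * p) := by
  intro x r s hr hrs hsT
  have := hP x
  have ht : 0 < s - r := sub_pos.mpr hrs
  have hX : ∀ u, Measurable (X u) := fun _ => hXmeas.comp measurable_prodMk_left
  have hpt : ∀ u, Measurable (Function.uncurry (pt u)) := fun _ =>
    hptmeas.comp measurable_prodMk_left
  have hint : ∀ u z, 0 < u → Integrable (pt u z) := fun u z hu =>
    integrable_of_map_eq_withDensity_ofReal ((hpt u).comp measurable_prodMk_left)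
      (hptnn u z · hu) (hdens z u hu)
  have hlaw : (P x).map (fun ω => (X r ω, X s ω))
      = (P x).map (X r) ⊗ₘ densityKernel volume (pt (s - r)) := by
    have := map_prod_eq_compProd_of_condExp (natFiltration_le hX r) (measurable_natFiltration X r)
      (hX _) (hpt _) (fun z y => hptnn _ z y ht) (fun z => hint _ z ht) fun B hB =>
        hMarkov x r (s - r) _ (measurable_const.indicator hB)
          ⟨1, fun y => by by_cases hy : y ∈ B <;> simp [hy]⟩ hr ht
    rwa [add_sub_cancel] at this
  have hI : ENNReal.ofReal (∫ y, Q y * ‖y‖ ^ (γ * p))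
      = ∫⁻ y, ENNReal.ofReal (Q y * ‖y‖ ^ (γ * p)) :=
    ofReal_integral_eq_lintegral_ofReal hQγp
      (Filter.Eventually.of_forall fun y => mul_nonneg (hQnn y) (by positivity))
  have hmoment : ∫⁻ ω, ENNReal.ofReal (‖X s ω - X r ω‖ ^ (γ * p)) ∂P x
      ≤ ENNReal.ofReal (Cst * (s - r) ^ (γ * p / α) * ∫ y, Q y * ‖y‖ ^ (γ * p)) := by
    rw [ENNReal.ofReal_mul (by positivity), hI]
    refine lintegral_comp_le_of_map_eq_compProd (hX r) (hX s) hlaw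
      (F := fun q => ENNReal.ofReal (‖q.2 - q.1‖ ^ (γ * p))) (by fun_prop) fun z => ?_
    rw [lintegral_densityKernel _ (hpt _) z (by fun_prop)]
    refine lintegral_mul_rpow_norm_sub_le volume hCst.le ht z fun y => ?_
    rw [finrank_euclideanSpace_fin]
    exact hptbound z y _ ht (by linarith)
  have hB : 0 ≤ Cst * (s - r) ^ (γ * p / α) * ∫ y, Q y * ‖y‖ ^ (γ * p) :=
    mul_nonneg (by positivity) (integral_nonneg fun y => mul_nonneg (hQnn y) (by positivity))
  simpa only [mul_assoc] using
    integral_rpow_abs_sub_le_of_holder (hX r) (hX s) hhmeas hHγ0 (by linarith) hB hHγ hmoment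

theorem statement_7
    {d : ℕ} {Ω : Type} [MeasurableSpace Ω]
    (X : ℝ → Ω → EuclideanSpace ℝ (Fin d))
    (P : EuclideanSpace ℝ (Fin d) → Measure Ω)
    (hP : ∀ x, IsProbabilityMeasure (P x))
    (hXmeas : Measurable (Function.uncurry X))
    (hX0 : ∀ x, ∀ᵐ ω ∂ P x, X 0 ω = x)
    (T Cst α : ℝ) (hT : 0 < T) (hCst : 0 < Cst) (hα : α ∈ Set.Ioc (0:ℝ) 2)
    (Q : EuclideanSpace ℝ (Fin d) → ℝ)
    (hQmeas : Measurable Q) (hQnn : ∀ y, 0 ≤ Q y) (hQone : (∫ y, Q y) = 1)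
    (pt pt' : ℝ → EuclideanSpace ℝ (Fin d) → EuclideanSpace ℝ (Fin d) → ℝ)
    (hptmeas : Measurable (fun q : ℝ × EuclideanSpace ℝ (Fin d) × EuclideanSpace ℝ (Fin d) => pt q.1 q.2.1 q.2.2))
    (hpt'meas : Measurable (fun q : ℝ × EuclideanSpace ℝ (Fin d) × EuclideanSpace ℝ (Fin d) => pt' q.1 q.2.1 q.2.2))
    (hptnn : ∀ t x y, 0 < t → 0 ≤ pt t x y)
    (hptderiv : ∀ x y t, 0 < t → HasDerivAt (fun s => pt s x y) (pt' t x y) t)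
    (hptbound : ∀ x y t, 0 < t → t ≤ T →
      pt t x y ≤ Cst * t ^ (-(d:ℝ)/α) * Q ((t ^ (-1/α)) • (x - y)))
    (hpt'bound : ∀ x y t, 0 < t → t ≤ T →
      |pt' t x y| ≤ Cst * t ^ (-1 - (d:ℝ)/α) * Q ((t ^ (-1/α)) • (x - y)))
    (hdens : ∀ x t, 0 < t →
      Measure.map (X t) (P x)
        = (volume : Measure (EuclideanSpace ℝ (Fin d))).withDensity
            (fun y => ENNReal.ofReal (pt t x y)))
    (hMarkov : ∀ (x : EuclideanSpace ℝ (Fin d)) (u v : ℝ),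
      ∀ g : EuclideanSpace ℝ (Fin d) → ℝ, Measurable g → (∃ M, ∀ y, |g y| ≤ M) →
      0 ≤ u → 0 < v →
      (P x)[(fun ω => g (X (u + v) ω)) | natFiltration X u]
        =ᵐ[P x] (fun ω => ∫ y, pt v (X u ω) y * g y))
    (h : EuclideanSpace ℝ (Fin d) → ℝ) (hhmeas : Measurable h)
    (γ : ℝ) (hγ : γ ∈ Set.Ioc (0:ℝ) 1)
    (Hγ : ℝ) (hHγ0 : 0 ≤ Hγ) (hHγ : ∀ a b, |h a - h b| ≤ Hγ * ‖a - b‖ ^ γ)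
    (p : ℝ) (hp : 1 ≤ p)
    (hQγp : Integrable (fun y : EuclideanSpace ℝ (Fin d) => Q y * ‖y‖ ^ (γ * p))) :
    ∀ (x : EuclideanSpace ℝ (Fin d)) (r s : ℝ), 0 ≤ r → r < s → s ≤ T →
      (∫ ω, |h (X s ω) - h (X r ω)| ^ p ∂ P x)
        ≤ Hγ ^ p * Cst * (s - r) ^ (γ * p / α) * ∫ y, Q y * ‖y‖ ^ (γ * p) :=
  statement_7_general X P hP hXmeas T Cst α hCst Q hQnn pt hptmeas hptnn hptbound hdens hMarkov h
    hhmeas γ Hγ hHγ0 hHγ p hp hQγp
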